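/- Let n ≥ 3 and let F be the Fibonacci function on the set 𝒜 of alternating geodesics of the Cayley tree Δ of Γₙ, relative to the root v₀. For every real number s > n − 1, the infinite sum ∑_{γ∈𝒜} F(γ)^{−s} converges. -/

import Mathlib

open scoped BigOperators

noncomputable section

namespace MarkoffHurwitz

/-- The Markoff–Hurwitz polynomial `H(x) = x₁² + ⋯ + xₙ² − x₁⋯xₙ`. -/
def MH (n : ℕ) (x : Fin n → ℂ) : ℂ := (∑ i, x i ^ 2) - ∏ i, x i

/-- The involution `bᵢ` replacing `xᵢ` by `(∏_{j≠i} x_j) − xᵢ`. -/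
def bmap (n : ℕ) (i : Fin n) (x : Fin n → ℂ) : Fin n → ℂ :=
  Function.update x i ((∏ j ∈ Finset.univ.erase i, x j) - x i)

lemma bmap_apply_ne (n : ℕ) (i : Fin n) (x : Fin n → ℂ) {j : Fin n} (h : j ≠ i) :
    bmap n i x j = x j := Function.update_of_ne h _ _

lemma bmap_apply_same (n : ℕ) (i : Fin n) (x : Fin n → ℂ) :
    bmap n i x i = (∏ j ∈ Finset.univ.erase i, x j) - x i := Function.update_self _ _ _

lemma prod_erase_bmap (n : ℕ) (i : Fin n) (x : Fin n → ℂ) :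
    ∏ j ∈ Finset.univ.erase i, bmap n i x j = ∏ j ∈ Finset.univ.erase i, x j :=
  Finset.prod_congr rfl fun j hj => bmap_apply_ne n i x (Finset.ne_of_mem_erase hj)

lemma bmap_involutive (n : ℕ) (i : Fin n) : Function.Involutive (bmap n i) := by
  intro x; funext j
  rcases eq_or_ne j i with rfl | h
  · rw [bmap_apply_same, prod_erase_bmap, bmap_apply_same]; ring
  · rw [bmap_apply_ne n i _ h, bmap_apply_ne n i x h]

/-- The relators `bᵢ²` of the Coxeter presentation. -/
def MHrels (n : ℕ) : Set (FreeGroup (Fin n)) :=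
  Set.range fun i : Fin n => FreeGroup.of i * FreeGroup.of i

/-- The group `Γₙ = ⟨b₁,…,bₙ ∣ bᵢ² = 1⟩`, free product of `n` copies of `ℤ/2`. -/
abbrev Gam (n : ℕ) := PresentedGroup (MHrels n)

/-- The generator `bᵢ` as an element of `Γₙ`. -/
def gen {n : ℕ} (i : Fin n) : Gam n := PresentedGroup.of i

lemma gen_mul_self {n : ℕ} (i : Fin n) : gen i * gen i = 1 := by
  have h : PresentedGroup.mk (MHrels n) (FreeGroup.of i * FreeGroup.of i) = 1 := by
    have : (FreeGroup.of i * FreeGroup.of i) ∈ Subgroup.normalClosure (MHrels n) :=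
      Subgroup.subset_normalClosure ⟨i, rfl⟩
    exact (QuotientGroup.eq_one_iff _).2 this
  simpa [gen, PresentedGroup.of, map_mul] using h

lemma gen_inv {n : ℕ} (i : Fin n) : (gen i)⁻¹ = gen i :=
  inv_eq_of_mul_eq_one_right (gen_mul_self i)

/-- `bᵢ` as a permutation of `ℂⁿ`. -/
def bperm (n : ℕ) (i : Fin n) : Equiv.Perm (Fin n → ℂ) := (bmap_involutive n i).toPerm

/-- The action of `Γₙ` on `ℂⁿ` by the involutions `bᵢ`. -/
def act (n : ℕ) : Gam n →* Equiv.Perm (Fin n → ℂ) :=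
  PresentedGroup.toGroup (f := fun i => bperm n i) (by
    rintro r ⟨i, rfl⟩
    rw [map_mul, FreeGroup.lift_apply_of]
    refine Equiv.ext fun x => ?_
    simpa [bperm, Equiv.Perm.mul_apply] using bmap_involutive n i x)

lemma act_gen (n : ℕ) (i : Fin n) : act n (gen i) = bperm n i :=
  PresentedGroup.toGroup.of _

/-- The subgroup `⟨bᵢ, b_j⟩` associated to an unordered pair `{i,j}`. -/
def pairSub {n : ℕ} : Sym2 (Fin n) → Subgroup (Gam n) :=
  Sym2.lift ⟨fun i j => Subgroup.closure {gen i, gen j}, fun i j => by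
    show Subgroup.closure {gen i, gen j} = Subgroup.closure {gen j, gen i}
    rw [Set.pair_comm]⟩

lemma pairSub_mk {n : ℕ} (i j : Fin n) :
    pairSub s(i, j) = Subgroup.closure {gen i, gen j} := rfl

/-- An alternating geodesic in the Cayley tree of `Γₙ`: an unordered pair `{i,j}`
of distinct colors together with a coset `g⟨bᵢ,b_j⟩`. -/
structure AltGeo (n : ℕ) where
  pair : Sym2 (Fin n)
  nd : ¬ pair.IsDiag
  coset : Gam n ⧸ pairSub pair

/-- Coordinates outside of a pair `{i,j}`. -/
def offPair {n : ℕ} (s : Sym2 (Fin n)) : Finset (Fin n) :=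
  Finset.univ.filter fun k => ¬ k ∈ s

/-- Key invariance: the coordinates off the pair do not change when moving along the coset. -/
lemma coords_eq {n : ℕ} (a : Fin n → ℂ) (s : Sym2 (Fin n)) {t : Gam n}
    (ht : t ∈ pairSub s) (g : Gam n) {k : Fin n} (hk : ¬ k ∈ s) :
    act n (g * t)⁻¹ a k = act n g⁻¹ a k := by
  induction s using Sym2.ind with
  | _ i j =>
    rw [pairSub_mk] at ht
    induction ht using Subgroup.closure_induction generalizing g with
    | mem x hx =>
      have key : ∀ m : Fin n, m ∈ (s(i, j) : Sym2 (Fin n)) → ∀ g : Gam n,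
          act n (g * gen m)⁻¹ a k = act n g⁻¹ a k := by
        intro m hm g
        rw [mul_inv_rev, gen_inv, map_mul, Equiv.Perm.mul_apply, act_gen]
        have hkm : k ≠ m := fun h => hk (h ▸ hm)
        exact bmap_apply_ne n m _ hkm
      rcases hx with rfl | rfl
      · exact key i (Sym2.mem_mk_left i j) g
      · exact key j (Sym2.mem_mk_right i j) g
    | one => rw [mul_one]
    | mul x y hx hy ihx ihy => rw [← mul_assoc]; rw [ihy, ihx]
    | inv x hx ih =>
      have := ih (g := g * x⁻¹)
      rw [mul_assoc, inv_mul_cancel, mul_one] at this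
      exact this.symm

/-- Representative version of the extended Hurwitz map. -/
def phiRep (n : ℕ) (a : Fin n → ℂ) (s : Sym2 (Fin n)) (g : Gam n) : ℂ :=
  ∏ k ∈ offPair s, act n g⁻¹ a k

/-- Representative version of the square sum weight. -/
def sigRep (n : ℕ) (a : Fin n → ℂ) (s : Sym2 (Fin n)) (g : Gam n) : ℂ :=
  ∑ k ∈ offPair s, (act n g⁻¹ a k) ^ 2

/-- The extended Hurwitz map `φ_a : 𝒜 → ℂ`, `φ(γ) = ∏_{k∉{i,j}} x_k`. -/
def phiA (n : ℕ) (a : Fin n → ℂ) (γ : AltGeo n) : ℂ :=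
  Quotient.liftOn' γ.coset (phiRep n a γ.pair) (by
    intro g h hgh
    have hmem : g⁻¹ * h ∈ pairSub γ.pair := QuotientGroup.leftRel_apply.mp hgh
    have : h = g * (g⁻¹ * h) := by group
    rw [this]
    unfold phiRep
    exact (Finset.prod_congr rfl fun k hk =>
      (coords_eq a γ.pair hmem g (Finset.mem_filter.mp hk).2)).symm)

/-- The square sum weight `σ_a : 𝒜 → ℂ`, `σ(γ) = ∑_{k∉{i,j}} x_k²`. -/
def sigA (n : ℕ) (a : Fin n → ℂ) (γ : AltGeo n) : ℂ :=
  Quotient.liftOn' γ.coset (sigRep n a γ.pair) (by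
    intro g h hgh
    have hmem : g⁻¹ * h ∈ pairSub γ.pair := QuotientGroup.leftRel_apply.mp hgh
    have : h = g * (g⁻¹ * h) := by group
    rw [this]
    unfold sigRep
    exact (Finset.sum_congr rfl fun k hk => by
      rw [coords_eq a γ.pair hmem g (Finset.mem_filter.mp hk).2]).symm)

/-- The set `𝒜_φ(K)` of alternating geodesics with `|φ(γ)| ≤ K`. -/
def AK (n : ℕ) (a : Fin n → ℂ) (K : ℝ) : Set (AltGeo n) :=
  {γ | ‖phiA n a γ‖ ≤ K}

/-- The Bowditch domain `𝒟 ⊆ ℂⁿ`. -/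
def BD (n : ℕ) : Set (Fin n → ℂ) :=
  {a | (∀ γ : AltGeo n, phiA n a γ ∉ (fun r : ℝ => (r : ℂ)) '' Set.Icc (-2 : ℝ) 2) ∧
    ∃ K : ℝ, 2 < K ∧ (AK n a K).Finite}



/-- Word length of `g ∈ Γₙ` with respect to the generators `b₁,…,bₙ`. -/
def glen (n : ℕ) (g : Gam n) : ℕ :=
  sInf {m | ∃ l : List (Fin n), l.length = m ∧ g = (l.map gen).prod}

/-- The alternating geodesic `[g;{i,k}]` through the vertex `g` with colors `{i,k}`. -/
def mkGeo {n : ℕ} (i k : Fin n) (h : i ≠ k) (g : Gam n) : AltGeo n :=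
  ⟨s(i, k), by rwa [Sym2.mk_isDiag_iff], QuotientGroup.mk g⟩

/-- `F : 𝒜 → ℕ` is the Fibonacci function relative to the root `v₀ = 1`:
`F(γ) = 1` if the root lies on `γ`, and otherwise `F(γ) = F([v*;{i,k}]) + F([v*;{j,k}])`,
where `v*` is the vertex of `γ` closest to the root and `k` is the label of the first
edge of the geodesic from `v*` to the root. -/
def IsFib (n : ℕ) (F : AltGeo n → ℕ) : Prop :=
  (∀ γ : AltGeo n, γ.coset = QuotientGroup.mk 1 → F γ = 1) ∧
  (∀ γ : AltGeo n, γ.coset ≠ QuotientGroup.mk 1 →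
    ∀ g : Gam n, QuotientGroup.mk g = γ.coset →
      (∀ h : Gam n, QuotientGroup.mk h = γ.coset → glen n g ≤ glen n h) →
      ∀ i j k : Fin n, γ.pair = s(i, j) → ∀ (hki : k ≠ i) (hkj : k ≠ j),
        glen n (g * gen k) < glen n g →
        F γ = F (mkGeo i k hki.symm g) + F (mkGeo j k hkj.symm g))

/-- `log⁺ t = max (0, log t)`. -/
def logp (t : ℝ) : ℝ := max 0 (Real.log t)

/-- The subgroup `⟨b_j : j ≠ i⟩`. -/
def hatSub (n : ℕ) (i : Fin n) : Subgroup (Gam n) :=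
  Subgroup.closure {g | ∃ j : Fin n, j ≠ i ∧ g = gen j}

lemma coord_eq (n : ℕ) (a : Fin n → ℂ) (i : Fin n) {t : Gam n}
    (ht : t ∈ hatSub n i) (g : Gam n) :
    act n (g * t)⁻¹ a i = act n g⁻¹ a i := by
  induction ht using Subgroup.closure_induction generalizing g with
  | mem x hx =>
    obtain ⟨j, hji, rfl⟩ := hx
    rw [mul_inv_rev, gen_inv, map_mul, Equiv.Perm.mul_apply, act_gen]
    exact bmap_apply_ne n j _ hji.symm
  | one => rw [mul_one]
  | mul x y hx hy ihx ihy => rw [← mul_assoc, ihy, ihx]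
  | inv x hx ih =>
    have := ih (g := g * x⁻¹)
    rw [mul_assoc, inv_mul_cancel, mul_one] at this
    exact this.symm

/-- For a coset `X = g⟨b_j : j ≠ i⟩ ∈ 𝒳ᵢ`, the (constant) `i`-th coordinate `φ(X)`. -/
def coordX (n : ℕ) (a : Fin n → ℂ) (i : Fin n) (X : Gam n ⧸ hatSub n i) : ℂ :=
  Quotient.liftOn' X (fun g => act n g⁻¹ a i) (by
    intro g h hgh
    have hmem : g⁻¹ * h ∈ hatSub n i := QuotientGroup.leftRel_apply.mp hgh
    have hh : h = g * (g⁻¹ * h) := by group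
    show act n g⁻¹ a i = act n h⁻¹ a i
    rw [hh, coord_eq n a i hmem g])

/-- `a ∈ ℂⁿ` is dihedral if some point of its `Γₙ`-orbit has two vanishing coordinates. -/
def Dihedral (n : ℕ) (a : Fin n → ℂ) : Prop :=
  ∃ (g : Gam n) (i j : Fin n), i ≠ j ∧ act n g a i = 0 ∧ act n g a j = 0

/-- The alternating geodesic `γ` contains the edge of color `i` incident to the vertex `g`. -/
def containsEdge {n : ℕ} (γ : AltGeo n) (g : Gam n) (i : Fin n) : Prop :=
  i ∈ γ.pair ∧ (QuotientGroup.mk g : Gam n ⧸ pairSub γ.pair) = γ.coset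

/-- Two alternating geodesics share an edge of the tree. -/
def ShareEdge {n : ℕ} (α β : AltGeo n) : Prop :=
  ∃ (g : Gam n) (i : Fin n), containsEdge α g i ∧ containsEdge β g i

/-- A set of alternating geodesics is edge-connected. -/
def EdgeConnected {n : ℕ} (P : Set (AltGeo n)) : Prop :=
  ∀ α ∈ P, ∀ β ∈ P, ∃ (m : ℕ) (c : ℕ → AltGeo n),
    c 0 = α ∧ c m = β ∧ (∀ t ≤ m, c t ∈ P) ∧ ∀ t < m, ShareEdge (c t) (c (t + 1))

/-- `h(z) = 1 − √(1 − 4/z²)`, with the principal square root (positive real part). -/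
def hfun (z : ℂ) : ℂ := 1 - (1 - 4 / z ^ 2) ^ ((1 : ℂ) / 2)


/-!
A geodesic `γ` avoiding the root is `[v; {i, j}]` for its vertex `v` closest to the root, and
`F γ = F [v; {i, k}] + F [v; {j, k}]`, where `k` labels the edge from `v` towards the root. Along
the path to the root the values `F [v; {l, k}]`, `l ≠ k`, obey a Fibonacci recursion: they are
positive, each is at most the sum of any two others, and they determine those at the parent of
`v`; hence, together with `k`, they determine `v`. So a geodesic with `F γ = m` is determined by
`i`, `j`, `k` and `n - 2` values in `[1, m]`; there are at most `n³ m ^ (n - 2)` of them, and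
`∑ F(γ) ^ (-s) ≤ C ∑ m ^ (n - 2 - s)` converges for `s > n - 1`.
-/

section NormalForm

variable {n : ℕ}

abbrev ReducedWord (n : ℕ) := {l : List (Fin n) // l.IsChain (· ≠ ·)}

def reduceCons (k : Fin n) : List (Fin n) → List (Fin n)
  | [] => [k]
  | a :: t => if a = k then t else k :: a :: t

lemma isChain_reduceCons (k : Fin n) {l : List (Fin n)} (hl : l.IsChain (· ≠ ·)) :
    (reduceCons k l).IsChain (· ≠ ·) := by
  cases l with
  | nil => simp [reduceCons]
  | cons a t =>
    by_cases h : a = k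
    · simpa [reduceCons, h] using hl.tail
    · simpa [reduceCons, h, List.isChain_cons_cons] using ⟨Ne.symm h, hl⟩

lemma reduceCons_of_isChain {k : Fin n} {l : List (Fin n)} (hl : (k :: l).IsChain (· ≠ ·)) :
    reduceCons k l = k :: l := by
  cases l with
  | nil => rfl
  | cons a t => simp [reduceCons, (List.isChain_cons_cons.1 hl).1.symm]

lemma reduceCons_reduceCons (k : Fin n) {l : List (Fin n)} (hl : l.IsChain (· ≠ ·)) :
    reduceCons k (reduceCons k l) = l := by
  cases l with
  | nil => simp [reduceCons]
  | cons a t =>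
    by_cases h : a = k
    · subst h
      simp only [reduceCons, if_true]
      exact reduceCons_of_isChain hl
    · simp [reduceCons, h]

lemma prod_reduceCons (k : Fin n) (l : List (Fin n)) :
    ((reduceCons k l).map gen).prod = gen k * (l.map gen).prod := by
  cases l with
  | nil => simp [reduceCons]
  | cons a t =>
    by_cases h : a = k
    · subst h
      simp [reduceCons, ← mul_assoc, gen_mul_self]
    · simp [reduceCons, h]

def reduceConsPerm (k : Fin n) : Equiv.Perm (ReducedWord n) :=
  Function.Involutive.toPerm (fun r => ⟨reduceCons k r.1, isChain_reduceCons k r.2⟩)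
    fun r => Subtype.ext (reduceCons_reduceCons k r.2)

/-- Van der Waerden's trick: acting on reduced words proves that normal forms are unique. -/
def wordAction (n : ℕ) : Gam n →* Equiv.Perm (ReducedWord n) :=
  PresentedGroup.toGroup (f := reduceConsPerm) (by
    rintro r ⟨i, rfl⟩
    rw [map_mul, FreeGroup.lift_apply_of]
    exact Equiv.ext fun r => Subtype.ext (reduceCons_reduceCons i r.2))

lemma wordAction_gen (k : Fin n) : wordAction n (gen k) = reduceConsPerm k :=
  PresentedGroup.toGroup.of _

def normalForm (g : Gam n) : List (Fin n) :=
  (wordAction n g ⟨[], List.isChain_nil⟩).1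

lemma isChain_normalForm (g : Gam n) : (normalForm g).IsChain (· ≠ ·) :=
  (wordAction n g _).2

@[simp]
lemma normalForm_one : normalForm (1 : Gam n) = [] := rfl

lemma normalForm_gen_mul (k : Fin n) (g : Gam n) :
    normalForm (gen k * g) = reduceCons k (normalForm g) := by
  rw [normalForm, map_mul, Equiv.Perm.mul_apply, wordAction_gen]
  rfl

lemma normalForm_prod_of_isChain {l : List (Fin n)} (hl : l.IsChain (· ≠ ·)) :
    normalForm (l.map gen).prod = l := by
  induction l with
  | nil => rfl
  | cons a t ih =>
    rw [List.map_cons, List.prod_cons, normalForm_gen_mul, ih hl.tail, reduceCons_of_isChain hl]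

lemma normalForm_prod_sublist (l : List (Fin n)) : (normalForm (l.map gen).prod).Sublist l := by
  induction l with
  | nil => simp
  | cons a t ih =>
    rw [List.map_cons, List.prod_cons, normalForm_gen_mul]
    generalize normalForm (t.map gen).prod = l at ih
    cases l with
    | nil => simp [reduceCons]
    | cons b u =>
      by_cases h : b = a
      · simpa [reduceCons, h] using
          (List.sublist_cons_self b u).trans (ih.trans (List.sublist_cons_self a t))
      · simpa [reduceCons, h] using ih

lemma prod_normalForm (g : Gam n) : ((normalForm g).map gen).prod = g := by
  have hg : g ∈ Subgroup.closure (Set.range (gen (n := n))) := by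
    change g ∈ Subgroup.closure (Set.range PresentedGroup.of)
    rw [PresentedGroup.closure_range_of]; trivial
  induction hg using Subgroup.closure_induction_left with
  | one => rfl
  | mul_left x hx y _ ih =>
    obtain ⟨k, rfl⟩ := hx
    rw [normalForm_gen_mul, prod_reduceCons, ih]
  | inv_mul_cancel x hx y _ ih =>
    obtain ⟨k, rfl⟩ := hx
    rw [gen_inv, normalForm_gen_mul, prod_reduceCons, ih]

lemma normalForm_eq_nil_iff {g : Gam n} : normalForm g = [] ↔ g = 1 := by
  refine ⟨fun h => ?_, fun h => h ▸ normalForm_one⟩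
  rw [← prod_normalForm g, h, List.map_nil, List.prod_nil]

lemma glen_eq_length_normalForm (g : Gam n) : glen n g = (normalForm g).length := by
  refine le_antisymm (Nat.sInf_le ⟨normalForm g, rfl, (prod_normalForm g).symm⟩) ?_
  refine le_csInf ⟨_, normalForm g, rfl, (prod_normalForm g).symm⟩ ?_
  rintro m ⟨l, rfl, rfl⟩
  exact (normalForm_prod_sublist l).length_le

@[simp]
lemma glen_one : glen n (1 : Gam n) = 0 := by
  rw [glen_eq_length_normalForm, normalForm_one, List.length_nil]

lemma glen_eq_zero_iff {g : Gam n} : glen n g = 0 ↔ g = 1 := by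
  rw [glen_eq_length_normalForm, List.length_eq_zero_iff, normalForm_eq_nil_iff]

lemma normalForm_mul_sublist (g h : Gam n) :
    (normalForm (g * h)).Sublist (normalForm g ++ normalForm h) := by
  conv_lhs => rw [← prod_normalForm g, ← prod_normalForm h, ← List.prod_append, ← List.map_append]
  exact normalForm_prod_sublist _

lemma normalForm_inv_sublist (g : Gam n) : (normalForm g⁻¹).Sublist (normalForm g).reverse := by
  suffices g⁻¹ = ((normalForm g).reverse.map gen).prod from this ▸ normalForm_prod_sublist _
  conv_lhs => rw [← prod_normalForm g]
  rw [List.prod_inv_reverse, List.map_map, List.map_reverse,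
    show (·⁻¹) ∘ gen = gen from funext gen_inv]

lemma mem_of_mem_normalForm {S : Set (Fin n)} {w : Gam n}
    (hw : w ∈ Subgroup.closure (gen '' S)) {a : Fin n} (ha : a ∈ normalForm w) : a ∈ S := by
  induction hw using Subgroup.closure_induction generalizing a with
  | mem x hx =>
    obtain ⟨k, hk, rfl⟩ := hx
    rw [← mul_one (gen k), normalForm_gen_mul, normalForm_one] at ha
    rwa [List.mem_singleton.1 ha]
  | one => simp at ha
  | mul x y _ _ ihx ihy =>
    rcases List.mem_append.1 ((normalForm_mul_sublist x y).subset ha) with h | h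
    exacts [ihx h, ihy h]
  | inv x _ ih => exact ih (List.mem_reverse.1 ((normalForm_inv_sublist x).subset ha))

end NormalForm

section Tree

variable {n : ℕ}

def parent (g : Gam n) : Gam n := ((normalForm g).dropLast.map gen).prod

lemma normalForm_parent (g : Gam n) : normalForm (parent g) = (normalForm g).dropLast :=
  normalForm_prod_of_isChain ((isChain_normalForm g).prefix (List.dropLast_prefix _))

variable [NeZero n]

/-- The label of the edge from `g` towards the root; it is junk (`0`) at the root itself. -/
def parentLabel (g : Gam n) : Fin n := (normalForm g).getLastD 0

lemma normalForm_eq_parent_append {g : Gam n} (hg : g ≠ 1) :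
    normalForm g = normalForm (parent g) ++ [parentLabel g] := by
  have hne : normalForm g ≠ [] := mt normalForm_eq_nil_iff.1 hg
  rw [normalForm_parent, parentLabel, List.getLastD_eq_getLast?, List.getLast?_eq_some_getLast hne]
  exact (List.dropLast_concat_getLast hne).symm

lemma parent_mul_gen_parentLabel {g : Gam n} (hg : g ≠ 1) :
    parent g * gen (parentLabel g) = g := by
  conv_rhs => rw [← prod_normalForm g, normalForm_eq_parent_append hg]
  rw [List.map_append, List.prod_append, prod_normalForm, List.map_singleton, List.prod_singleton]

lemma mul_gen_parentLabel {g : Gam n} (hg : g ≠ 1) : g * gen (parentLabel g) = parent g :=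
  mul_eq_of_eq_mul_inv (by rw [gen_inv, parent_mul_gen_parentLabel hg])

lemma eq_gen_of_parent_eq_one {g : Gam n} (hg : g ≠ 1) (hp : parent g = 1) :
    g = gen (parentLabel g) := by
  simpa [hp] using (parent_mul_gen_parentLabel hg).symm

lemma glen_parent_lt {g : Gam n} (hg : g ≠ 1) : glen n (parent g) < glen n g := by
  rw [glen_eq_length_normalForm, glen_eq_length_normalForm g, normalForm_eq_parent_append hg,
    List.length_append]
  simp

lemma parentLabel_parent_ne {g : Gam n} (hg : g ≠ 1) (hp : parent g ≠ 1) :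
    parentLabel (parent g) ≠ parentLabel g := by
  have hchain := isChain_normalForm g
  rw [normalForm_eq_parent_append hg, normalForm_eq_parent_append hp, List.append_assoc,
    List.singleton_append, List.isChain_append_cons_cons] at hchain
  exact hchain.2.1

lemma parent_induction {P : Gam n → Prop} (child_of_root : ∀ g, g ≠ 1 → parent g = 1 → P g)
    (step : ∀ g, g ≠ 1 → parent g ≠ 1 → P (parent g) → P g) {g : Gam n} (hg : g ≠ 1) : P g := by
  induction hlen : glen n g using Nat.strong_induction_on generalizing g with
  | _ m ih =>
    by_cases hp : parent g = 1
    · exact child_of_root g hg hp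
    · exact step g hg hp (ih _ (hlen ▸ glen_parent_lt hg) hp rfl)

lemma glen_mul_of_mem_pairSub {i j : Fin n} {p w : Gam n} (hi : parentLabel p ≠ i)
    (hj : parentLabel p ≠ j) (hw : w ∈ pairSub s(i, j)) :
    glen n (p * w) = glen n p + glen n w := by
  have hchain : (normalForm p ++ normalForm w).IsChain (· ≠ ·) := by
    rcases eq_or_ne p 1 with rfl | hp
    · simpa using isChain_normalForm w
    have hletters : ∀ c ∈ normalForm w, c ∈ ({i, j} : Set (Fin n)) := fun c hc =>
      mem_of_mem_normalForm (by rwa [Set.image_pair, ← pairSub_mk]) hc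
    have hwchain := isChain_normalForm w
    generalize normalForm w = l at hletters hwchain
    cases l with
    | nil => simpa using isChain_normalForm p
    | cons c u =>
      have hpchain := isChain_normalForm p
      rw [normalForm_eq_parent_append hp] at hpchain ⊢
      rw [List.append_assoc, List.singleton_append, List.isChain_append_cons_cons]
      rcases hletters c List.mem_cons_self with rfl | rfl
      exacts [⟨hpchain, hi, hwchain⟩, ⟨hpchain, hj, hwchain⟩]
  have hprod : p * w = ((normalForm p ++ normalForm w).map gen).prod := by
    rw [List.map_append, List.prod_append, prod_normalForm, prod_normalForm]
  rw [glen_eq_length_normalForm, hprod, normalForm_prod_of_isChain hchain, List.length_append,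
    glen_eq_length_normalForm, glen_eq_length_normalForm]

lemma glen_le_of_mk_eq {i j : Fin n} {p h : Gam n} (hi : parentLabel p ≠ i)
    (hj : parentLabel p ≠ j)
    (hh : (QuotientGroup.mk h : Gam n ⧸ pairSub s(i, j)) = QuotientGroup.mk p) :
    glen n p ≤ glen n h := by
  rw [← mul_inv_cancel_left p h, glen_mul_of_mem_pairSub hi hj (QuotientGroup.eq.1 hh.symm)]
  exact Nat.le_add_right _ _

end Tree

section Geodesics

variable {n : ℕ}

lemma gen_mem_pairSub_left (i k : Fin n) : gen i ∈ pairSub s(i, k) :=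
  Subgroup.subset_closure (Set.mem_insert _ _)

lemma gen_mem_pairSub_right (i k : Fin n) : gen k ∈ pairSub s(i, k) :=
  Subgroup.subset_closure (Set.mem_insert_of_mem _ rfl)

lemma mkGeo_mul_of_mem {i k : Fin n} (h : i ≠ k) (g : Gam n) {t : Gam n}
    (ht : t ∈ pairSub s(i, k)) : mkGeo i k h (g * t) = mkGeo i k h g := by
  rw [mkGeo, mkGeo, QuotientGroup.mk_mul_of_mem g ht]

lemma mkGeo_comm {i k : Fin n} (h : i ≠ k) (g : Gam n) : mkGeo i k h g = mkGeo k i h.symm g := by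
  have key : ∀ (p q : Sym2 (Fin n)) (hpq : p = q) nd nd',
      (⟨p, nd, QuotientGroup.mk g⟩ : AltGeo n) = ⟨q, nd', QuotientGroup.mk g⟩ := by
    rintro p _ rfl _ _; rfl
  exact key _ _ Sym2.eq_swap _ _

lemma AltGeo.eq_of_coset_eq_one {γ γ' : AltGeo n} (h : γ.pair = γ'.pair)
    (hγ : γ.coset = QuotientGroup.mk 1) (hγ' : γ'.coset = QuotientGroup.mk 1) : γ = γ' := by
  obtain ⟨p, nd, c⟩ := γ
  obtain ⟨p', nd', c'⟩ := γ'
  dsimp only at h hγ hγ'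
  subst h hγ hγ'
  rfl

lemma AltGeo.exists_mkGeo_eq [NeZero n] {γ : AltGeo n} (hγ : γ.coset ≠ QuotientGroup.mk 1) :
    ∃ (i j : Fin n) (hij : i ≠ j) (v : Gam n),
      v ≠ 1 ∧ i ≠ parentLabel v ∧ j ≠ parentLabel v ∧ mkGeo i j hij v = γ := by
  obtain ⟨p, nd, c⟩ := γ
  induction p using Sym2.ind with
  | _ i j =>
    -- a shortest representative of the coset is the vertex of `γ` closest to the root
    obtain ⟨v, hv, hmin⟩ := exists_minimalFor_of_wellFoundedLT
      (fun v : Gam n => (QuotientGroup.mk v : Gam n ⧸ pairSub s(i, j)) = c) (glen n)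
      (QuotientGroup.mk_surjective c)
    have hv1 : v ≠ 1 := by rintro rfl; exact hγ hv.symm
    have hlabel : ∀ k, gen k ∈ pairSub s(i, j) → k ≠ parentLabel v := by
      rintro k hk rfl
      have hlt : glen n (v * gen (parentLabel v)) < glen n v := by
        rw [mul_gen_parentLabel hv1]; exact glen_parent_lt hv1
      exact hlt.not_ge (hmin ((QuotientGroup.mk_mul_of_mem v hk).trans hv) hlt.le)
    exact ⟨i, j, by rwa [Sym2.mk_isDiag_iff] at nd, v, hv1,
      hlabel i (gen_mem_pairSub_left i j), hlabel j (gen_mem_pairSub_right i j), by rw [mkGeo, hv]⟩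

end Geodesics

section Fibonacci

variable {n : ℕ} [NeZero n] {F : AltGeo n → ℕ}

lemma mkGeo_parent {v : Gam n} (hv : v ≠ 1) {i : Fin n} (h : i ≠ parentLabel v) :
    mkGeo i (parentLabel v) h (parent v) = mkGeo i (parentLabel v) h v := by
  rw [← mul_gen_parentLabel hv]
  exact mkGeo_mul_of_mem h v (gen_mem_pairSub_right _ _)

/-- The value `F [v; {i, k}]`, where `k` labels the edge from `v` towards the root. -/
def fibAt (F : AltGeo n → ℕ) (v : Gam n) (i : Fin n) : ℕ :=
  if h : i = parentLabel v then 0 else F (mkGeo i (parentLabel v) h v)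

lemma fibAt_parentLabel (F : AltGeo n → ℕ) (v : Gam n) : fibAt F v (parentLabel v) = 0 :=
  dif_pos rfl

lemma fibAt_of_ne (F : AltGeo n → ℕ) {v : Gam n} {i : Fin n} (h : i ≠ parentLabel v) :
    fibAt F v i = F (mkGeo i (parentLabel v) h v) :=
  dif_neg h

lemma fibAt_parentLabel_parent (F : AltGeo n → ℕ) {v : Gam n} (hv : v ≠ 1) (hp : parent v ≠ 1) :
    fibAt F v (parentLabel (parent v)) = fibAt F (parent v) (parentLabel v) := by
  have hne := parentLabel_parent_ne hv hp
  rw [fibAt_of_ne F hne, fibAt_of_ne F hne.symm, ← mkGeo_parent hv hne, mkGeo_comm]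

namespace IsFib

lemma apply_mkGeo (hF : IsFib n F) {v : Gam n} (hv : v ≠ 1) {i j : Fin n} (hij : i ≠ j)
    (hi : i ≠ parentLabel v) (hj : j ≠ parentLabel v) :
    F (mkGeo i j hij v) = fibAt F v i + fibAt F v j := by
  have hmin : ∀ h : Gam n, QuotientGroup.mk h = (mkGeo i j hij v).coset → glen n v ≤ glen n h :=
    fun h hh => glen_le_of_mk_eq hi.symm hj.symm hh
  have hroot : (mkGeo i j hij v).coset ≠ QuotientGroup.mk 1 := fun h1 =>
    hv (glen_eq_zero_iff.1 (Nat.le_zero.1 (glen_one (n := n) ▸ hmin 1 h1.symm)))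
  rw [fibAt_of_ne F hi, fibAt_of_ne F hj]
  refine hF.2 _ hroot v rfl hmin i j _ rfl hi.symm hj.symm ?_
  rw [mul_gen_parentLabel hv]
  exact glen_parent_lt hv

lemma fibAt_of_parent_eq_one (hF : IsFib n F) {v : Gam n} (hv : v ≠ 1) (hp : parent v = 1)
    {i : Fin n} (hi : i ≠ parentLabel v) : fibAt F v i = 1 := by
  rw [fibAt_of_ne F hi, ← mkGeo_parent hv hi]
  exact hF.1 _ (congrArg QuotientGroup.mk hp)

lemma fibAt_of_ne_of_ne (hF : IsFib n F) {v : Gam n} (hv : v ≠ 1) (hp : parent v ≠ 1)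
    {i : Fin n} (hi : i ≠ parentLabel v) (hi' : i ≠ parentLabel (parent v)) :
    fibAt F v i = fibAt F (parent v) i + fibAt F (parent v) (parentLabel v) := by
  rw [fibAt_of_ne F hi, ← mkGeo_parent hv hi]
  exact hF.apply_mkGeo hp hi hi' (parentLabel_parent_ne hv hp).symm

lemma one_le_fibAt (hF : IsFib n F) {v : Gam n} (hv : v ≠ 1) {i : Fin n}
    (hi : i ≠ parentLabel v) : 1 ≤ fibAt F v i := by
  refine parent_induction (P := fun v => ∀ i, i ≠ parentLabel v → 1 ≤ fibAt F v i)
    (fun v hv hp i hi => (hF.fibAt_of_parent_eq_one hv hp hi).ge) ?_ hv i hi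
  intro v hv hp ih i hi
  by_cases hi' : i = parentLabel (parent v)
  · rw [hi', fibAt_parentLabel_parent F hv hp]
    exact ih _ (parentLabel_parent_ne hv hp).symm
  · rw [hF.fibAt_of_ne_of_ne hv hp hi hi']
    exact le_add_right (ih i hi')

lemma fibAt_le_add (hF : IsFib n F) {v : Gam n} (hv : v ≠ 1) {i j : Fin n} (hij : i ≠ j)
    (hi : i ≠ parentLabel v) (hj : j ≠ parentLabel v) (l : Fin n) :
    fibAt F v l ≤ fibAt F v i + fibAt F v j := by
  refine parent_induction (P := fun v => ∀ i j, i ≠ j → i ≠ parentLabel v → j ≠ parentLabel v →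
    ∀ l, fibAt F v l ≤ fibAt F v i + fibAt F v j) ?_ ?_ hv i j hij hi hj l
  · intro v hv hp i j _ hi hj l
    rw [hF.fibAt_of_parent_eq_one hv hp hi, hF.fibAt_of_parent_eq_one hv hp hj]
    by_cases hl : l = parentLabel v
    · rw [hl, fibAt_parentLabel]; omega
    · rw [hF.fibAt_of_parent_eq_one hv hp hl]; omega
  intro v hv hp ih i j hij hi hj l
  set k := parentLabel v
  set k' := parentLabel (parent v)
  have hkk' : k' ≠ k := parentLabel_parent_ne hv hp
  have ha : fibAt F v k' = fibAt F (parent v) k := fibAt_parentLabel_parent F hv hp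
  have hrec : ∀ x, x ≠ k → x ≠ k' → fibAt F v x = fibAt F (parent v) x + fibAt F (parent v) k :=
    fun x hx hx' => hF.fibAt_of_ne_of_ne hv hp hx hx'
  have hge : ∀ x, x ≠ k → fibAt F (parent v) k ≤ fibAt F v x := fun x hx => by
    by_cases hx' : x = k'
    · rw [hx', ha]
    · rw [hrec x hx hx']; exact Nat.le_add_left _ _
  by_cases hlk : l = k
  · rw [hlk, fibAt_parentLabel]; exact Nat.zero_le _
  by_cases hlk' : l = k'
  · rw [hlk', ha]; exact (hge i hi).trans (Nat.le_add_right _ _)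
  rw [hrec l hlk hlk']
  by_cases hik' : i = k'
  · have := ih j k (by rintro rfl; exact hj rfl) (fun h => hij (hik'.trans h.symm)) hkk'.symm l
    rw [hik', ha, hrec j hj (fun h => hij (hik'.trans h.symm))]
    omega
  by_cases hjk' : j = k'
  · have := ih i k (by rintro rfl; exact hi rfl) hik' hkk'.symm l
    rw [hjk', ha, hrec i hi hik']
    omega
  have := ih i j hij hik' hjk' l
  rw [hrec i hi hik', hrec j hj hjk']
  omega

lemma fibAt_parentLabel_parent_lt (hF : IsFib n F) {v : Gam n} (hv : v ≠ 1) (hp : parent v ≠ 1)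
    {i : Fin n} (hi : i ≠ parentLabel v) (hi' : i ≠ parentLabel (parent v)) :
    fibAt F v (parentLabel (parent v)) < fibAt F v i := by
  rw [fibAt_parentLabel_parent F hv hp, hF.fibAt_of_ne_of_ne hv hp hi hi']
  have := hF.one_le_fibAt hp hi'
  omega

lemma parent_eq_one_iff (hn : 3 ≤ n) (hF : IsFib n F) {v : Gam n} (hv : v ≠ 1) :
    parent v = 1 ↔ ∀ i, i ≠ parentLabel v → fibAt F v i = 1 := by
  refine ⟨fun hp i hi => hF.fibAt_of_parent_eq_one hv hp hi, fun h => ?_⟩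
  by_contra hp
  obtain ⟨i, hi, hi'⟩ := Fin.exists_ne_and_ne_of_two_lt (parentLabel v) (parentLabel (parent v)) hn
  have h1 := hF.one_le_fibAt hp hi'
  have h2 := hF.one_le_fibAt hp (parentLabel_parent_ne hv hp).symm
  have := hF.fibAt_of_ne_of_ne hv hp hi hi'
  rw [h i hi] at this
  omega

lemma fibAt_parent (hF : IsFib n F) {v : Gam n} (hv : v ≠ 1) (hp : parent v ≠ 1) (i : Fin n) :
    fibAt F (parent v) i =
      if i = parentLabel (parent v) then 0
      else if i = parentLabel v then fibAt F v (parentLabel (parent v))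
      else fibAt F v i - fibAt F v (parentLabel (parent v)) := by
  split_ifs with h h'
  · rw [h, fibAt_parentLabel]
  · rw [h', fibAt_parentLabel_parent F hv hp]
  · rw [hF.fibAt_of_ne_of_ne hv hp h' h, fibAt_parentLabel_parent F hv hp, Nat.add_sub_cancel]

lemma parentLabel_parent_eq (hF : IsFib n F) {v v' : Gam n} (hv : v ≠ 1) (hv' : v' ≠ 1)
    (hp : parent v ≠ 1) (hp' : parent v' ≠ 1) (hk : parentLabel v = parentLabel v')
    (hf : fibAt F v = fibAt F v') : parentLabel (parent v) = parentLabel (parent v') := by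
  by_contra hne
  have h := hF.fibAt_parentLabel_parent_lt hv hp
    (hk ▸ (parentLabel_parent_ne hv' hp')) (Ne.symm hne)
  have h' := hF.fibAt_parentLabel_parent_lt hv' hp'
    (hk ▸ (parentLabel_parent_ne hv hp)) hne
  rw [hf] at h
  omega

lemma eq_of_fibAt_eq (hn : 3 ≤ n) (hF : IsFib n F) {v v' : Gam n} (hv : v ≠ 1) (hv' : v' ≠ 1)
    (hk : parentLabel v = parentLabel v') (hf : fibAt F v = fibAt F v') : v = v' := by
  refine parent_induction (P := fun v => ∀ v', v' ≠ 1 → parentLabel v = parentLabel v' →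
    fibAt F v = fibAt F v' → v = v') ?_ ?_ hv v' hv' hk hf
  · intro v hv hp v' hv' hk hf
    have hp' : parent v' = 1 := by
      rw [hF.parent_eq_one_iff hn hv] at hp
      rwa [hF.parent_eq_one_iff hn hv', ← hk, ← hf]
    rw [eq_gen_of_parent_eq_one hv hp, eq_gen_of_parent_eq_one hv' hp', hk]
  · intro v hv hp ih v' hv' hk hf
    have hp' : parent v' ≠ 1 := by
      rwa [Ne, hF.parent_eq_one_iff hn hv', ← hk, ← hf, ← hF.parent_eq_one_iff hn hv]
    have hk' := hF.parentLabel_parent_eq hv hv' hp hp' hk hf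
    have hf' : fibAt F (parent v) = fibAt F (parent v') := by
      funext i
      rw [hF.fibAt_parent hv hp, hF.fibAt_parent hv' hp', hk, hk', hf]
    calc v = parent v * gen (parentLabel v) := (parent_mul_gen_parentLabel hv).symm
      _ = parent v' * gen (parentLabel v') := by rw [ih (parent v') hp' hk' hf', hk]
      _ = v' := parent_mul_gen_parentLabel hv'

lemma two_le (hF : IsFib n F) {γ : AltGeo n} (hγ : γ.coset ≠ QuotientGroup.mk 1) : 2 ≤ F γ := by
  obtain ⟨i, j, hij, v, hv, hi, hj, rfl⟩ := AltGeo.exists_mkGeo_eq hγ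
  rw [hF.apply_mkGeo hv hij hi hj]
  have := hF.one_le_fibAt hv hi
  have := hF.one_le_fibAt hv hj
  omega

end IsFib

end Fibonacci

section Counting

variable {n : ℕ}

def fibBox (j k : Fin n) (m : ℕ) : Finset (Fin n → ℕ) :=
  Fintype.piFinset fun l => if l = j ∨ l = k then {0} else Finset.Icc 1 m

lemma card_fibBox {j k : Fin n} (hjk : j ≠ k) (m : ℕ) : (fibBox j k m).card = m ^ (n - 2) := by
  have hcompl : (Finset.univ.filter fun l : Fin n => ¬(l = j ∨ l = k)) = Finset.univ \ {j, k} := by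
    ext l; simp
  rw [fibBox, Fintype.card_piFinset]
  simp only [apply_ite Finset.card, Finset.card_singleton, Nat.card_Icc, add_tsub_cancel_right]
  rw [Finset.prod_ite, Finset.prod_const_one, one_mul, Finset.prod_const, hcompl,
    Finset.card_sdiff_of_subset (Finset.subset_univ _), Finset.card_pair hjk, Finset.card_univ,
    Fintype.card_fin]

lemma card_le_of_coset_eq_one {w : Finset (AltGeo n)}
    (hw : ∀ γ ∈ w, γ.coset = QuotientGroup.mk 1) : w.card ≤ n ^ 2 :=
  calc w.card ≤ (Finset.univ : Finset (Sym2 (Fin n))).card :=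
        Finset.card_le_card_of_injOn AltGeo.pair (fun _ _ => Finset.mem_coe.2 (Finset.mem_univ _))
          fun γ hγ γ' hγ' h => AltGeo.eq_of_coset_eq_one h (hw γ hγ) (hw γ' hγ')
    _ ≤ Fintype.card (Fin n × Fin n) :=
        Fintype.card_le_of_surjective (Function.uncurry Sym2.mk) Sym2.mk_surjective
    _ = n ^ 2 := by rw [Fintype.card_prod, Fintype.card_fin, sq]

variable [NeZero n] {F : AltGeo n → ℕ}

lemma IsFib.update_fibAt_mem_fibBox (hF : IsFib n F) {v : Gam n} (hv : v ≠ 1) {i j : Fin n}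
    (hij : i ≠ j) (hi : i ≠ parentLabel v) (hj : j ≠ parentLabel v) :
    Function.update (fibAt F v) j 0 ∈ fibBox j (parentLabel v) (fibAt F v i + fibAt F v j) := by
  refine Fintype.mem_piFinset.2 fun l => ?_
  by_cases hlj : l = j
  · simp [hlj]
  by_cases hlk : l = parentLabel v
  · rw [hlk] at hlj ⊢
    simp [Function.update_of_ne hlj, fibAt_parentLabel]
  simp only [hlj, hlk, or_self, if_false, Function.update_of_ne hlj, Finset.mem_Icc]
  exact ⟨hF.one_le_fibAt hv hlk, hF.fibAt_le_add hv hij hi hj l⟩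

lemma IsFib.eq_of_update_fibAt_eq (hn : 3 ≤ n) (hF : IsFib n F) {v v' : Gam n} (hv : v ≠ 1)
    (hv' : v' ≠ 1) {i j : Fin n} (hij : i ≠ j) (hk : parentLabel v = parentLabel v')
    (hsum : fibAt F v i + fibAt F v j = fibAt F v' i + fibAt F v' j)
    (hupd : Function.update (fibAt F v) j 0 = Function.update (fibAt F v') j 0) : v = v' := by
  have hoff : ∀ l, l ≠ j → fibAt F v l = fibAt F v' l := fun l hl => by
    simpa only [Function.update_of_ne hl] using congrFun hupd l
  refine hF.eq_of_fibAt_eq hn hv hv' hk (funext fun l => ?_)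
  by_cases hl : l = j
  · have := hoff i hij
    rw [hl]
    omega
  · exact hoff l hl

/-- A geodesic `mkGeo i j v` with `F = m` is recorded by `i`, `j`, the label `k` of `v` and the
values of `F` around `v` except at `j`, which is recovered as `m - fibAt F v i`. -/
lemma IsFib.card_le_of_coset_ne_one (hn : 3 ≤ n) (hF : IsFib n F) {m : ℕ}
    {w : Finset (AltGeo n)} (hw : ∀ γ ∈ w, γ.coset ≠ QuotientGroup.mk 1 ∧ F γ = m) :
    w.card ≤ n ^ 3 * m ^ (n - 2) := by
  classical
  choose! i j hij v hv hi hj hmk using fun γ hγ => AltGeo.exists_mkGeo_eq (hw γ hγ).1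
  have hFv : ∀ γ ∈ w, fibAt F (v γ) (i γ) + fibAt F (v γ) (j γ) = m := fun γ hγ => by
    rw [← hF.apply_mkGeo (hv γ hγ) (hij γ hγ) (hi γ hγ) (hj γ hγ), hmk γ hγ, (hw γ hγ).2]
  let code : AltGeo n → Σ _ : Fin n × Fin n × Fin n, Fin n → ℕ := fun γ =>
    ⟨(i γ, j γ, parentLabel (v γ)), Function.update (fibAt F (v γ)) (j γ) 0⟩
  let labels := (Finset.univ : Finset (Fin n × Fin n × Fin n)).filter fun t => t.2.1 ≠ t.2.2
  have hmaps : Set.MapsTo code w (labels.sigma fun t => fibBox t.2.1 t.2.2 m) := fun γ hγ =>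
    Finset.mem_sigma.2 ⟨Finset.mem_filter.2 ⟨Finset.mem_univ _, hj γ hγ⟩, hFv γ hγ ▸
      hF.update_fibAt_mem_fibBox (hv γ hγ) (hij γ hγ) (hi γ hγ) (hj γ hγ)⟩
  have hinj : Set.InjOn code w := by
    intro γ hγ γ' hγ' hcode
    simp only [code, Sigma.mk.inj_iff, Prod.mk.injEq, heq_iff_eq] at hcode
    obtain ⟨⟨hi', hj', hk'⟩, hupd⟩ := hcode
    have hsum := (hFv γ hγ).trans (hFv γ' hγ').symm
    rw [← hi', ← hj'] at hsum
    rw [← hj'] at hupd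
    have hvv := hF.eq_of_update_fibAt_eq hn (hv γ hγ) (hv γ' hγ') (hij γ hγ) hk' hsum hupd
    rw [← hmk γ hγ, ← hmk γ' hγ']
    congr 1
  calc w.card ≤ (labels.sigma fun t => fibBox t.2.1 t.2.2 m).card :=
        Finset.card_le_card_of_injOn code hmaps hinj
    _ = labels.card * m ^ (n - 2) := by
        rw [Finset.card_sigma,
          Finset.sum_const_nat fun t ht => card_fibBox (Finset.mem_filter.1 ht).2 m]
    _ ≤ n ^ 3 * m ^ (n - 2) := by
        gcongr
        exact (Finset.card_filter_le _ _).trans_eq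
          (by simp only [Finset.card_univ, Fintype.card_prod, Fintype.card_fin]; ring)

lemma IsFib.card_le (hn : 3 ≤ n) (hF : IsFib n F) {m : ℕ} {w : Finset (AltGeo n)}
    (hw : ∀ γ ∈ w, F γ = m) : w.card ≤ n ^ 3 * m ^ (n - 2) := by
  by_cases hm : m = 1
  · subst hm
    have hroot : ∀ γ ∈ w, γ.coset = QuotientGroup.mk 1 := fun γ hγ => by
      by_contra h
      have := hF.two_le h
      rw [hw γ hγ] at this
      omega
    calc w.card ≤ n ^ 2 := card_le_of_coset_eq_one hroot
      _ ≤ n ^ 3 * 1 ^ (n - 2) := by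
        rw [one_pow, mul_one]; exact Nat.pow_le_pow_right (by omega) (by omega)
  · refine hF.card_le_of_coset_ne_one hn fun γ hγ => ⟨fun h => hm ?_, hw γ hγ⟩
    rw [← hw γ hγ, hF.1 γ h]

end Counting

lemma summable_comp_of_card_fiber_le {α : Type*} (N : α → ℕ) {φ : ℕ → ℝ} (hφ : ∀ m, 0 ≤ φ m)
    {c : ℕ → ℕ} (hc : ∀ m (w : Finset α), (∀ a ∈ w, N a = m) → w.card ≤ c m)
    (hsum : Summable fun m => (c m : ℝ) * φ m) : Summable fun a => φ (N a) := by
  classical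
  refine summable_of_sum_le (c := ∑' m, (c m : ℝ) * φ m) (fun a => hφ (N a)) fun u => ?_
  calc ∑ a ∈ u, φ (N a)
      = ∑ m ∈ u.image N, ((u.filter (N · = m)).card : ℝ) * φ m := by
        rw [← Finset.sum_fiberwise_of_maps_to' (fun a ha => Finset.mem_image_of_mem N ha)]
        simp only [Finset.sum_const, nsmul_eq_mul]
    _ ≤ ∑ m ∈ u.image N, (c m : ℝ) * φ m := by
        gcongr with m
        · exact hφ m
        · exact hc m _ fun a ha => (Finset.mem_filter.1 ha).2
    _ ≤ ∑' m, (c m : ℝ) * φ m :=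
        hsum.sum_le_tsum _ fun m _ => mul_nonneg (Nat.cast_nonneg _) (hφ m)

lemma summable_pow_mul_rpow_neg {d : ℕ} {s : ℝ} (hs : d + 1 < s) :
    Summable fun m : ℕ => (m : ℝ) ^ d * (m : ℝ) ^ (-s) := by
  refine (Real.summable_nat_rpow.2 (show (d : ℝ) + -s < -1 by linarith)).congr fun m => ?_
  rw [Real.rpow_add' (Nat.cast_nonneg m) (by linarith), Real.rpow_natCast]

/-- The sum `∑_{γ∈𝒜} F(γ)^{−s}` converges for `s > n − 1`. -/
theorem fibonacci_sum_converges (n : ℕ) (hn : 3 ≤ n) (F : AltGeo n → ℕ) (hF : IsFib n F)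
    (s : ℝ) (hs : (n : ℝ) - 1 < s) :
    Summable fun γ : AltGeo n => (F γ : ℝ) ^ (-s) := by
  have : NeZero n := ⟨by omega⟩
  refine summable_comp_of_card_fiber_le F (fun m => Real.rpow_nonneg (Nat.cast_nonneg m) (-s))
    (fun m w hw => hF.card_le hn hw) ?_
  have hd : ((n - 2 : ℕ) : ℝ) + 1 < s := by
    rw [Nat.cast_sub (by omega)]
    push_cast
    linarith
  simpa [mul_assoc] using (summable_pow_mul_rpow_neg hd).mul_left ((n : ℝ) ^ 3)

end MarkoffHurwitz
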